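/- arXiv:0910.5181 — 10 statements merged into one kernel-verified Lean document; each statement's English description precedes it below -/
import Mathlib

section
/- Let $B$ be a nonzero algebra over a commutative ring $k$. The following are equivalent: (i) every surjective algebra homomorphism $f:A_1\times A_2\to B$ from a direct product of two algebras factors through the projection onto $A_1$ or through the projection onto $A_2$; (ii) $B$ is not the sum $B_1+B_2$ of two nonzero mutually annihilating subalgebras (i.e., with $B_1B_2=B_2B_1=\{0\}$); (iii) $Z(B)=\{0\}$ and $B$ is not an internal direct product of two nonzero subalgebras. -/
/-!
A surjection `f : A₁ × A₂ → B` writes `B` as the sum of the mutually annihilating subalgebras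
`f (A₁ × 0)` and `f (0 × A₂)`; conversely two such subalgebras `B₁, B₂` give the surjection
`B₁ × B₂ → B`, `(x, y) ↦ x + y`. Factoring through a projection means that one summand vanishes.
The intersection of two mutually annihilating subalgebras with sum `B` lies in `Z(B)`, so when
`Z(B) = 0` every such sum is direct; and a nonzero `Z(B)` together with `B` itself is a sum of
this kind that is not direct.
-/

namespace NonUnitalSubalgebra

variable {k B : Type*} [CommSemiring k] [NonUnitalNonAssocSemiring B] [Module k B]

variable (k B) in
def totalAnnihilator [SMulCommClass k B B] [IsScalarTower k B B] : NonUnitalSubalgebra k B where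
  carrier := {x | ∀ y, x * y = 0 ∧ y * x = 0}
  add_mem' {a b} ha hb y := by
    simp only [add_mul, mul_add, (ha y).1, (ha y).2, (hb y).1, (hb y).2, add_zero, and_self]
  zero_mem' y := ⟨zero_mul y, mul_zero y⟩
  mul_mem' {a b} ha _ y := by simp only [(ha b).1, zero_mul, mul_zero, and_self]
  smul_mem' c {a} ha y := by
    simp only [smul_mul_assoc, mul_smul_comm, (ha y).1, (ha y).2, smul_zero, and_self]

def addMap (B₁ B₂ : NonUnitalSubalgebra k B)
    (hann : ∀ x ∈ B₁, ∀ y ∈ B₂, x * y = 0 ∧ y * x = 0) : B₁ × B₂ →ₙₐ[k] B where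
  toFun p := p.1 + p.2
  map_smul' c p := (smul_add c (p.1 : B) p.2).symm
  map_zero' := by simp
  map_add' p q := by simp only [Prod.fst_add, Prod.snd_add, NonUnitalSubalgebra.coe_add]; abel
  map_mul' p q := by
    simp only [Prod.fst_mul, Prod.snd_mul, NonUnitalSubalgebra.coe_mul, add_mul, mul_add,
      (hann _ p.1.2 _ q.2.2).1, (hann _ q.1.2 _ p.2.2).2, add_zero, zero_add]

variable {B₁ B₂ : NonUnitalSubalgebra k B}

@[simp]
theorem addMap_apply (hann : ∀ x ∈ B₁, ∀ y ∈ B₂, x * y = 0 ∧ y * x = 0) (p : B₁ × B₂) :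
    addMap B₁ B₂ hann p = p.1 + p.2 :=
  rfl

theorem addMap_surjective (hann : ∀ x ∈ B₁, ∀ y ∈ B₂, x * y = 0 ∧ y * x = 0)
    (hsum : ∀ b : B, ∃ x ∈ B₁, ∃ y ∈ B₂, b = x + y) :
    Function.Surjective (addMap B₁ B₂ hann) := by
  intro b
  obtain ⟨x, hx, y, hy, rfl⟩ := hsum b
  exact ⟨(⟨x, hx⟩, ⟨y, hy⟩), rfl⟩

theorem mem_totalAnnihilator_of_mem_of_mem [SMulCommClass k B B] [IsScalarTower k B B]
    (hann : ∀ x ∈ B₁, ∀ y ∈ B₂, x * y = 0 ∧ y * x = 0)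
    (hsum : ∀ b : B, ∃ x ∈ B₁, ∃ y ∈ B₂, b = x + y) {x : B} (hx₁ : x ∈ B₁) (hx₂ : x ∈ B₂) :
    x ∈ totalAnnihilator k B := by
  intro b
  obtain ⟨u, hu, v, hv, rfl⟩ := hsum b
  constructor
  · rw [mul_add, (hann x hx₁ v hv).1, (hann u hu x hx₂).2, add_zero]
  · rw [add_mul, (hann u hu x hx₂).1, (hann x hx₁ v hv).2, add_zero]

end NonUnitalSubalgebra

namespace NonUnitalAlgHom

variable {k A₁ A₂ B : Type*} [CommSemiring k] [NonUnitalNonAssocSemiring A₁] [NonUnitalNonAssocSemiring A₂]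
  [NonUnitalNonAssocSemiring B] [Module k A₁] [Module k A₂] [Module k B] (f : A₁ × A₂ →ₙₐ[k] B)

theorem map_eq_map_inl_add_map_inr (p : A₁ × A₂) : f p = f (p.1, 0) + f (0, p.2) := by
  rw [← map_add, Prod.mk_add_mk, add_zero, zero_add]

theorem map_eq_comp_inl_fst (h : ∀ a₂, f (0, a₂) = 0) (p : A₁ × A₂) :
    f p = f.comp (inl k A₁ A₂) p.1 := by
  rw [f.map_eq_map_inl_add_map_inr, h, add_zero]
  rfl

theorem map_eq_comp_inr_snd (h : ∀ a₁, f (a₁, 0) = 0) (p : A₁ × A₂) :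
    f p = f.comp (inr k A₁ A₂) p.2 := by
  rw [f.map_eq_map_inl_add_map_inr, h, zero_add]
  rfl

theorem range_comp_inl_mul_range_comp_inr :
    ∀ x ∈ NonUnitalAlgHom.range (f.comp (inl k A₁ A₂)),
      ∀ y ∈ NonUnitalAlgHom.range (f.comp (inr k A₁ A₂)), x * y = 0 ∧ y * x = 0 := by
  intro x hx y hy
  obtain ⟨a₁, rfl⟩ := (mem_range _).1 hx
  obtain ⟨a₂, rfl⟩ := (mem_range _).1 hy
  simp only [comp_apply, inl_apply, inr_apply, ← map_mul, Prod.mk_mul_mk, mul_zero, zero_mul,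
    ← Prod.zero_eq_mk, map_zero, and_self]

theorem range_comp_inl_add_range_comp_inr (hf : Function.Surjective f) (b : B) :
    ∃ x ∈ NonUnitalAlgHom.range (f.comp (inl k A₁ A₂)),
      ∃ y ∈ NonUnitalAlgHom.range (f.comp (inr k A₁ A₂)), b = x + y := by
  obtain ⟨p, rfl⟩ := hf b
  exact ⟨_, ⟨p.1, rfl⟩, _, ⟨p.2, rfl⟩, f.map_eq_map_inl_add_map_inr p⟩

end NonUnitalAlgHom

universe u

/-- Lemma 1.6: for a nonzero algebra `B` over a commutative ring `k`, TFAE: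
(i) every surjective homomorphism `A₁ × A₂ → B` factors through one of the projections;
(ii) `B` is not the sum of two nonzero mutually annihilating subalgebras;
(iii) `Z(B) = {0}` and `B` is not an internal direct product of two nonzero subalgebras. -/
theorem stmt1 {k : Type u} (B : Type u) [CommRing k]
    [NonUnitalNonAssocRing B] [Module k B]
    [SMulCommClass k B B] [IsScalarTower k B B]
    (hB : ∃ b : B, b ≠ 0) :
    List.TFAE
      [ -- (i)
        (∀ (A₁ A₂ : Type u) [NonUnitalNonAssocRing A₁] [NonUnitalNonAssocRing A₂]
            [Module k A₁] [Module k A₂]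
            [SMulCommClass k A₁ A₁] [IsScalarTower k A₁ A₁]
            [SMulCommClass k A₂ A₂] [IsScalarTower k A₂ A₂]
            (f : (A₁ × A₂) →ₙₐ[k] B), Function.Surjective f →
            (∃ g : A₁ →ₙₐ[k] B, ∀ p : A₁ × A₂, f p = g p.1) ∨
            (∃ g : A₂ →ₙₐ[k] B, ∀ p : A₁ × A₂, f p = g p.2)),
        -- (ii)
        ¬ (∃ B₁ B₂ : NonUnitalSubalgebra k B,
            (∃ x ∈ B₁, x ≠ 0) ∧ (∃ x ∈ B₂, x ≠ 0) ∧
            (∀ x ∈ B₁, ∀ y ∈ B₂, x * y = 0 ∧ y * x = 0) ∧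
            (∀ b : B, ∃ x ∈ B₁, ∃ y ∈ B₂, b = x + y)),
        -- (iii)
        ((∀ x : B, (∀ y : B, x * y = 0 ∧ y * x = 0) → x = 0) ∧
          ¬ (∃ B₁ B₂ : NonUnitalSubalgebra k B,
            (∃ x ∈ B₁, x ≠ 0) ∧ (∃ x ∈ B₂, x ≠ 0) ∧
            (∀ x ∈ B₁, ∀ y ∈ B₂, x * y = 0 ∧ y * x = 0) ∧
            (∀ b : B, ∃ x ∈ B₁, ∃ y ∈ B₂, b = x + y) ∧
            (∀ x : B, x ∈ B₁ → x ∈ B₂ → x = 0))) ] := by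
  open NonUnitalSubalgebra NonUnitalAlgHom in
  tfae_have 1 → 2 := by
    rintro h₁ ⟨B₁, B₂, ⟨x₁, hx₁, hx₁0⟩, ⟨x₂, hx₂, hx₂0⟩, hann, hsum⟩
    rcases h₁ B₁ B₂ (addMap B₁ B₂ hann) (addMap_surjective hann hsum) with ⟨g, hg⟩ | ⟨g, hg⟩
    · exact hx₂0 (by simpa using hg (0, ⟨x₂, hx₂⟩))
    · exact hx₁0 (by simpa using hg (⟨x₁, hx₁⟩, 0))
  tfae_have 2 → 3 := by
    intro hnd
    refine ⟨fun x hx => ?_, fun ⟨B₁, B₂, h₁, h₂, hann, hsum, _⟩ => hnd ⟨B₁, B₂, h₁, h₂, hann, hsum⟩⟩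
    by_contra hx0
    obtain ⟨b, hb⟩ := hB
    exact hnd ⟨totalAnnihilator k B, ⊤, ⟨x, hx, hx0⟩, ⟨b, trivial, hb⟩, fun x hx y _ => hx y,
      fun b => ⟨0, zero_mem _, b, trivial, (zero_add b).symm⟩⟩
  tfae_have 3 → 1 := by
    rintro ⟨hZ, hnd⟩ A₁ A₂ _ _ _ _ _ _ _ _ f hf
    have hann := f.range_comp_inl_mul_range_comp_inr
    have hsum := f.range_comp_inl_add_range_comp_inr hf
    have hinf := fun x hx₁ hx₂ => hZ x (mem_totalAnnihilator_of_mem_of_mem hann hsum hx₁ hx₂)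
    by_cases hinr : ∃ y ∈ NonUnitalAlgHom.range (f.comp (inr k A₁ A₂)), y ≠ 0
    · have hinl : ∀ x ∈ NonUnitalAlgHom.range (f.comp (inl k A₁ A₂)), x = 0 := by
        by_contra! hinl
        exact hnd ⟨_, _, hinl, hinr, hann, hsum, hinf⟩
      exact Or.inr ⟨_, f.map_eq_comp_inr_snd fun a₁ => hinl _ ⟨a₁, rfl⟩⟩
    · push Not at hinr
      exact Or.inl ⟨_, f.map_eq_comp_inl_fst fun a₂ => hinr _ ⟨a₂, rfl⟩⟩
  tfae_finish
end

section
/- Let $(A_i)_{i\in I}$ be a family of nonempty sets, $B$ a set, and $f:\prod_I A_i\to B$ a map whose image has more than one element. Then $f$ factors, for every subset $J\subseteq I$, through the projection onto $\prod_{i\in J}A_i$ or through the projection onto $\prod_{i\in I-J}A_i$, if and only if there is an ultrafilter $\mathcal{U}$ on $I$ such that $f$ factors through the natural quotient map $\prod_I A_i\to \prod_I A_i/\mathcal{U}$. Moreover, such an ultrafilter $\mathcal{U}$ is uniquely determined by $f$. -/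
/-!
The sets `J` such that `f` depends only on the coordinates in `J` form a filter: closure under
intersection comes from splicing two points along `J`. Factoring through the quotient map to
`∏ Aᵢ / 𝒰` says exactly that every `𝒰`-large set lies in this filter, i.e. the filter is `≤ 𝒰`.
When `f` is not constant, the empty set does not belong to it, so an ultrafilter above it must
coincide with it; hence such a `𝒰` exists iff the filter is already ultra, i.e. contains `J` or
`Jᶜ` for every `J`, and it is unique.
-/

open Filter Function Set

section

variable {I B : Type*} {A : I → Type*} {f : (∀ i, A i) → B}

lemma dependsOn_iff_exists_factor [∀ i, Nonempty (A i)] {J : Set I} :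
    DependsOn f J ↔ ∃ g : (∀ i : J, A i) → B, ∀ a : ∀ i, A i, f a = g (fun i => a i) := by
  have : Nonempty B := ⟨f (Classical.arbitrary _)⟩
  simp only [dependsOn_iff_exists_comp, funext_iff, comp_apply]
  rfl

lemma DependsOn.inter {J K : Set I} (hJ : DependsOn f J) (hK : DependsOn f K) :
    DependsOn f (J ∩ K) := by
  classical
  intro x y hxy
  calc f x = f (J.piecewise x y) := hJ fun i hi => (piecewise_eq_of_mem _ _ _ hi).symm
    _ = f y := hK fun i hi => by
      by_cases hiJ : i ∈ J
      · rw [piecewise_eq_of_mem _ _ _ hiJ, hxy i ⟨hiJ, hi⟩]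
      · rw [piecewise_eq_of_notMem _ _ _ hiJ]

variable (f) in
def dependsOnFilter : Filter I where
  sets := {J | DependsOn f J}
  univ_sets := dependsOn_univ f
  sets_of_superset hJ hJK := hJ.mono hJK
  inter_sets := DependsOn.inter

@[simp]
lemma mem_dependsOnFilter {J : Set I} : J ∈ dependsOnFilter f ↔ DependsOn f J := Iff.rfl

lemma dependsOnFilter_neBot (hf : ∃ a a', f a ≠ f a') : (dependsOnFilter f).NeBot := by
  obtain ⟨a, a', hne⟩ := hf
  rw [neBot_iff, Ne, ← empty_mem_iff_bot, mem_dependsOnFilter]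
  exact fun h => hne (h.empty a a')

lemma dependsOnFilter_le_iff {L : Filter I} :
    dependsOnFilter f ≤ L ↔ ∀ a a' : ∀ i, A i, {i | a i = a' i} ∈ L → f a = f a' := by
  refine ⟨fun h a a' hL => h hL fun i hi => hi, fun h K hK a a' haK => ?_⟩
  exact h a a' (mem_of_superset hK haK)

lemma Filter.exists_ultrafilter_le_iff {α : Type*} {F : Filter α} [F.NeBot] :
    (∃ U : Ultrafilter α, F ≤ U) ↔ ∀ s, s ∈ F ∨ sᶜ ∈ F := by
  constructor
  · rintro ⟨U, hU⟩ s
    rw [U.unique hU]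
    exact U.mem_or_compl_mem s
  · intro h
    refine ⟨Ultrafilter.ofComplNotMemIff F fun s => ⟨fun hs => ?_, compl_notMem⟩, le_rfl⟩
    exact (h s).resolve_right hs

end

/-- Lemma 3.1: for `f : ∏ᵢ Aᵢ → B` with image having more than one element,
`f` factors, for every `J ⊆ I`, through the projection onto `∏_{i ∈ J} Aᵢ` or onto
`∏_{i ∈ I - J} Aᵢ`, if and only if `f` factors through the natural map to an
ultraproduct `∏ᵢ Aᵢ / 𝒰` (i.e. `f` identifies any two elements agreeing on a
`𝒰`-large set); moreover such an ultrafilter `𝒰` is unique. -/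
theorem stmt4 {I B : Type*} (A : I → Type*) [∀ i, Nonempty (A i)]
    (f : (∀ i, A i) → B) (hf : ∃ a a' : ∀ i, A i, f a ≠ f a') :
    ((∀ J : Set I,
        (∃ g : (∀ i : J, A i) → B, ∀ a : ∀ i, A i, f a = g (fun i => a i)) ∨
        (∃ g : (∀ i : (Jᶜ : Set I), A i) → B, ∀ a : ∀ i, A i, f a = g (fun i => a i))) ↔
      (∃ U : Ultrafilter I,
        ∀ a a' : ∀ i, A i, {i | a i = a' i} ∈ U → f a = f a')) ∧
    (∀ U V : Ultrafilter I,
      (∀ a a' : ∀ i, A i, {i | a i = a' i} ∈ U → f a = f a') →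
      (∀ a a' : ∀ i, A i, {i | a i = a' i} ∈ V → f a = f a') → U = V) := by
  have := dependsOnFilter_neBot hf
  have factors_iff (U : Ultrafilter I) :
      (∀ a a' : ∀ i, A i, {i | a i = a' i} ∈ U → f a = f a') ↔ dependsOnFilter f ≤ U :=
    dependsOnFilter_le_iff.symm
  simp only [← dependsOn_iff_exists_factor, ← mem_dependsOnFilter, factors_iff]
  refine ⟨exists_ultrafilter_le_iff.symm, fun U V hU hV => ?_⟩
  exact Ultrafilter.coe_injective ((U.unique hU).symm.trans (V.unique hV))
end

section
/- Let $f:\prod_I A_i \to B$ be a set map from a product of nonempty sets, and define $\mathcal{F}=\{J\subseteq I \mid f$ factors through the projection onto $\prod_{i\in J}A_i\}$. Then $\mathcal{F}$ is a filter on $I$; moreover, if the image of $f$ has more than one element, $\mathcal{F}$ is a proper filter. -/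
/-!
A map `f` depending on coordinates in `s` and in `t` depends on those in `s ∩ t`: given
`x` and `y` agreeing on `s ∩ t`, the point equal to `x` on `s` and to `y` off `s` agrees with `x`
on `s` and with `y` on `t`. Upward closure and `univ` are immediate, so the sets `f` depends on
form a filter. If `f` depended on `∅` it would be constant.
-/

open Set

section

variable {ι β : Type*} {α : ι → Type*} {f : (Π i, α i) → β}

lemma DependsOn.inter_s5 {s t : Set ι} (hs : DependsOn f s) (ht : DependsOn f t) :
    DependsOn f (s ∩ t) := by
  classical
  intro x y hxy
  calc f x = f (s.piecewise x y) := hs fun i hi => (piecewise_eq_of_mem s x y hi).symm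
    _ = f y := ht fun i hi => by
      by_cases his : i ∈ s
      · rw [piecewise_eq_of_mem s x y his]
        exact hxy i ⟨his, hi⟩
      · exact piecewise_eq_of_notMem s x y his

variable (f) in
def Filter.dependsOn : Filter ι where
  sets := {s | DependsOn f s}
  univ_sets := dependsOn_univ f
  sets_of_superset hs hst := hs.mono hst
  inter_sets hs ht := hs.inter_s5 ht

lemma dependsOn_iff_exists_restrict [∀ i, Nonempty (α i)] {s : Set ι} :
    DependsOn f s ↔ ∃ g : (Π i : s, α i) → β, ∀ x, f x = g fun i => x i := by
  have : Nonempty β := ⟨f (Classical.arbitrary _)⟩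
  simp only [dependsOn_iff_exists_comp, funext_iff]
  rfl

end

/-- The family `ℱ` of subsets `J ⊆ I` such that `f : ∏ᵢ Aᵢ → B` factors through the
projection onto `∏_{i ∈ J} Aᵢ` is a filter on `I`; it is proper (does not contain `∅`)
whenever the image of `f` has more than one element. -/
theorem stmt5 {I B : Type*} (A : I → Type*) [∀ i, Nonempty (A i)]
    (f : (∀ i, A i) → B) :
    (∃ F : Filter I, ∀ J : Set I,
        J ∈ F ↔ ∃ g : (∀ i : J, A i) → B, ∀ a : ∀ i, A i, f a = g (fun i => a i)) ∧
    ((∃ a a' : ∀ i, A i, f a ≠ f a') →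
      ¬ ∃ g : (∀ i : (∅ : Set I), A i) → B, ∀ a : ∀ i, A i, f a = g (fun i => a i)) := by
  refine ⟨⟨Filter.dependsOn f, fun J => dependsOn_iff_exists_restrict⟩, ?_⟩
  rintro ⟨a, a', hne⟩ hfactor
  exact hne ((dependsOn_iff_exists_restrict.2 hfactor).empty a a')
end

section
/- Let $f:A_1\times A_2\to B$ be a homomorphism of algebras over a commutative ring $k$ satisfying $f(A_1\times A_2)+Z(B)=B$ (in particular, any surjective homomorphism). Then $f(A_1)+Z(B)$ and $f(A_2)+Z(B)$ are ideals of $B$ which sum to $B$ and are each other's two-sided annihilators (i.e., they form an almost direct decomposition of $B$). -/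
/-!
Put `S₁ = f(A₁ × 0)`, `S₂ = f(0 × A₂)` and `Z = Z(B)`. Then `S₁ S₂ = S₂ S₁ = 0` and the hypothesis
says `B = S₁ + S₂ + Z`. Since `Z` annihilates everything, a product
`(s₁ + z) (t₁ + t₂ + w)` collapses to `s₁ t₁ ∈ S₁`, so `S₁ + Z` is an ideal. If `b = s₁ + s₂ + z`
annihilates `S₂ + Z`, then `s₂ t₂ = b t₂ = 0` for all `t₂ ∈ S₂`, and together with `s₂ S₁ = 0` this
puts `s₂ + z` in `Z`, so `b ∈ S₁ + Z`. Everything is symmetric in the two factors.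
-/

open Pointwise

section Annihilator

variable {B : Type*} [NonUnitalNonAssocSemiring B]

def twoSidedAnnihilator (S : Set B) : Set B :=
  {b | ∀ y ∈ S, b * y = 0 ∧ y * b = 0}

variable (B) in
def totalAnnihilator : Set B :=
  {z | ∀ y, z * y = 0 ∧ y * z = 0}

theorem mem_totalAnnihilator {z : B} :
    z ∈ totalAnnihilator B ↔ ∀ y, z * y = 0 ∧ y * z = 0 :=
  Iff.rfl

theorem subset_twoSidedAnnihilator_comm {S T : Set B} :
    S ⊆ twoSidedAnnihilator T ↔ T ⊆ twoSidedAnnihilator S :=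
  ⟨fun h _ ht _ hs => (h hs _ ht).symm, fun h _ hs _ ht => (h ht _ hs).symm⟩

theorem add_mul_of_mem_totalAnnihilator {z : B} (hz : z ∈ totalAnnihilator B) (x y : B) :
    (x + z) * y = x * y := by
  rw [add_mul, (mem_totalAnnihilator.1 hz y).1, add_zero]

theorem mul_add_of_mem_totalAnnihilator {z : B} (hz : z ∈ totalAnnihilator B) (x y : B) :
    y * (x + z) = y * x := by
  rw [mul_add, (mem_totalAnnihilator.1 hz y).2, add_zero]

theorem zero_mem_totalAnnihilator : (0 : B) ∈ totalAnnihilator B :=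
  mem_totalAnnihilator.2 fun y => ⟨zero_mul y, mul_zero y⟩

theorem add_mem_totalAnnihilator {z w : B} (hz : z ∈ totalAnnihilator B)
    (hw : w ∈ totalAnnihilator B) : z + w ∈ totalAnnihilator B :=
  mem_totalAnnihilator.2 fun y => by
    rw [add_mul_of_mem_totalAnnihilator hw, mul_add_of_mem_totalAnnihilator hw]
    exact mem_totalAnnihilator.1 hz y

theorem smul_mem_totalAnnihilator {k : Type*} [DistribSMul k B] [SMulCommClass k B B]
    [IsScalarTower k B B] (c : k) {z : B} (hz : z ∈ totalAnnihilator B) :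
    c • z ∈ totalAnnihilator B :=
  mem_totalAnnihilator.2 fun y => by
    rw [smul_mul_assoc, mul_smul_comm, (mem_totalAnnihilator.1 hz y).1,
      (mem_totalAnnihilator.1 hz y).2, smul_zero, and_self]

theorem subset_add_totalAnnihilator (S : Set B) : S ⊆ S + totalAnnihilator B :=
  fun s hs => ⟨s, hs, 0, zero_mem_totalAnnihilator, add_zero s⟩

theorem exists_add_add_eq_of_add_add_eq_univ {S₁ S₂ : Set B}
    (hspan : S₁ + S₂ + totalAnnihilator B = Set.univ) (b : B) :
    ∃ s₁ ∈ S₁, ∃ s₂ ∈ S₂, ∃ z ∈ totalAnnihilator B, s₁ + s₂ + z = b := by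
  obtain ⟨_, ⟨s₁, hs₁, s₂, hs₂, rfl⟩, z, hz, rfl⟩ : b ∈ S₁ + S₂ + totalAnnihilator B :=
    hspan ▸ Set.mem_univ b
  exact ⟨s₁, hs₁, s₂, hs₂, z, hz, rfl⟩

theorem exists_add_eq_of_add_add_eq_univ {S₁ S₂ : Set B}
    (hspan : S₁ + S₂ + totalAnnihilator B = Set.univ) (b : B) :
    ∃ x ∈ S₁ + totalAnnihilator B, ∃ y ∈ S₂ + totalAnnihilator B, b = x + y := by
  obtain ⟨s₁, hs₁, s₂, hs₂, z, hz, rfl⟩ := exists_add_add_eq_of_add_add_eq_univ hspan b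
  exact ⟨s₁, subset_add_totalAnnihilator S₁ hs₁, s₂ + z, ⟨s₂, hs₂, z, hz, rfl⟩, add_assoc _ _ _⟩

theorem add_mem_add_totalAnnihilator {σ : Type*} [SetLike σ B] [AddMemClass σ B] {S : σ}
    {x y : B} (hx : x ∈ (S : Set B) + totalAnnihilator B)
    (hy : y ∈ (S : Set B) + totalAnnihilator B) : x + y ∈ (S : Set B) + totalAnnihilator B := by
  obtain ⟨s, hs, z, hz, rfl⟩ := hx
  obtain ⟨t, ht, w, hw, rfl⟩ := hy
  exact ⟨s + t, add_mem hs ht, z + w, add_mem_totalAnnihilator hz hw, add_add_add_comm _ _ _ _⟩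

theorem smul_mem_add_totalAnnihilator {k σ : Type*} [DistribSMul k B] [SMulCommClass k B B]
    [IsScalarTower k B B] [SetLike σ B] [SMulMemClass σ k B] {S : σ} (c : k) {x : B}
    (hx : x ∈ (S : Set B) + totalAnnihilator B) : c • x ∈ (S : Set B) + totalAnnihilator B := by
  obtain ⟨s, hs, z, hz, rfl⟩ := hx
  exact ⟨c • s, SMulMemClass.smul_mem c hs, c • z, smul_mem_totalAnnihilator c hz,
    (smul_add c s z).symm⟩

theorem mul_mem_add_totalAnnihilator {σ : Type*} [SetLike σ B] [MulMemClass σ B] {S₁ : σ}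
    {S₂ : Set B} (horth : (S₁ : Set B) ⊆ twoSidedAnnihilator S₂)
    (hspan : (S₁ : Set B) + S₂ + totalAnnihilator B = Set.univ) {x : B}
    (hx : x ∈ (S₁ : Set B) + totalAnnihilator B) (y : B) :
    x * y ∈ (S₁ : Set B) + totalAnnihilator B ∧ y * x ∈ (S₁ : Set B) + totalAnnihilator B := by
  obtain ⟨s, hs, z, hz, rfl⟩ := hx
  obtain ⟨t₁, ht₁, t₂, ht₂, w, hw, rfl⟩ := exists_add_add_eq_of_add_add_eq_univ hspan y
  have hst₂ := horth hs t₂ ht₂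
  constructor
  · rw [add_mul_of_mem_totalAnnihilator hz, mul_add_of_mem_totalAnnihilator hw, mul_add,
      hst₂.1, add_zero]
    exact subset_add_totalAnnihilator _ (mul_mem hs ht₁)
  · rw [mul_add_of_mem_totalAnnihilator hz, add_mul_of_mem_totalAnnihilator hw, add_mul,
      hst₂.2, add_zero]
    exact subset_add_totalAnnihilator _ (mul_mem ht₁ hs)

theorem add_totalAnnihilator_subset_twoSidedAnnihilator {S₁ S₂ : Set B}
    (horth : S₁ ⊆ twoSidedAnnihilator S₂) :
    S₁ + totalAnnihilator B ⊆ twoSidedAnnihilator (S₂ + totalAnnihilator B) := by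
  rintro _ ⟨s₁, hs₁, z, hz, rfl⟩ _ ⟨s₂, hs₂, w, hw, rfl⟩
  rw [add_mul_of_mem_totalAnnihilator hz, mul_add_of_mem_totalAnnihilator hw,
    add_mul_of_mem_totalAnnihilator hw, mul_add_of_mem_totalAnnihilator hz]
  exact horth hs₁ s₂ hs₂

theorem twoSidedAnnihilator_subset_add_totalAnnihilator {S₁ S₂ : Set B}
    (horth : S₁ ⊆ twoSidedAnnihilator S₂) (hspan : S₁ + S₂ + totalAnnihilator B = Set.univ) :
    twoSidedAnnihilator (S₂ + totalAnnihilator B) ⊆ S₁ + totalAnnihilator B := by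
  intro b hb
  obtain ⟨s₁, hs₁, s₂, hs₂, z, hz, rfl⟩ := exists_add_add_eq_of_add_add_eq_univ hspan b
  refine ⟨s₁, hs₁, s₂ + z, mem_totalAnnihilator.2 fun y => ?_, (add_assoc _ _ _).symm⟩
  obtain ⟨t₁, ht₁, t₂, ht₂, w, hw, rfl⟩ := exists_add_add_eq_of_add_add_eq_univ hspan y
  have hbt₂ := hb t₂ (subset_add_totalAnnihilator S₂ ht₂)
  have hs₁t₂ := horth hs₁ t₂ ht₂
  have ht₁s₂ := horth ht₁ s₂ hs₂
  constructor
  · calc (s₂ + z) * (t₁ + t₂ + w) = s₂ * t₁ + s₂ * t₂ := by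
          rw [add_mul_of_mem_totalAnnihilator hz, mul_add_of_mem_totalAnnihilator hw, mul_add]
      _ = (s₁ + s₂ + z) * t₂ := by
          rw [add_mul_of_mem_totalAnnihilator hz, add_mul, hs₁t₂.1, ht₁s₂.2, zero_add]
      _ = 0 := hbt₂.1
  · calc (t₁ + t₂ + w) * (s₂ + z) = t₁ * s₂ + t₂ * s₂ := by
          rw [mul_add_of_mem_totalAnnihilator hz, add_mul_of_mem_totalAnnihilator hw, add_mul]
      _ = t₂ * (s₁ + s₂ + z) := by
          rw [mul_add_of_mem_totalAnnihilator hz, mul_add, hs₁t₂.2, ht₁s₂.1, zero_add]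
      _ = 0 := hbt₂.2

theorem add_totalAnnihilator_eq_twoSidedAnnihilator {S₁ S₂ : Set B}
    (horth : S₁ ⊆ twoSidedAnnihilator S₂) (hspan : S₁ + S₂ + totalAnnihilator B = Set.univ) :
    S₁ + totalAnnihilator B = twoSidedAnnihilator (S₂ + totalAnnihilator B) :=
  (add_totalAnnihilator_subset_twoSidedAnnihilator horth).antisymm
    (twoSidedAnnihilator_subset_add_totalAnnihilator horth hspan)

end Annihilator

namespace NonUnitalAlgHom

variable {R A₁ A₂ B : Type*} [CommSemiring R] [NonUnitalNonAssocSemiring A₁]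
  [NonUnitalNonAssocSemiring A₂] [NonUnitalNonAssocSemiring B] [Module R A₁] [Module R A₂]
  [Module R B]

theorem range_comp_inl_subset_twoSidedAnnihilator (f : A₁ × A₂ →ₙₐ[R] B) :
    (NonUnitalAlgHom.range (f.comp (inl R A₁ A₂)) : Set B) ⊆
      twoSidedAnnihilator (NonUnitalAlgHom.range (f.comp (inr R A₁ A₂)) : Set B) := by
  rintro _ ⟨a₁, rfl⟩ _ ⟨a₂, rfl⟩
  change f (a₁, 0) * f (0, a₂) = 0 ∧ f (0, a₂) * f (a₁, 0) = 0
  simp [← map_mul, Prod.mk_zero_zero]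

theorem range_comp_inl_add_range_comp_inr_add_totalAnnihilator (f : A₁ × A₂ →ₙₐ[R] B)
    (hf : ∀ b, ∃ p, ∃ z ∈ totalAnnihilator B, b = f p + z) :
    (NonUnitalAlgHom.range (f.comp (inl R A₁ A₂)) : Set B) +
      (NonUnitalAlgHom.range (f.comp (inr R A₁ A₂)) : Set B) + totalAnnihilator B = Set.univ := by
  refine Set.eq_univ_of_forall fun b => ?_
  obtain ⟨⟨a₁, a₂⟩, z, hz, rfl⟩ := hf b
  refine ⟨f (a₁, 0) + f (0, a₂), ⟨f (a₁, 0), ⟨a₁, rfl⟩, f (0, a₂), ⟨a₂, rfl⟩, rfl⟩, z, hz, ?_⟩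
  rw [← map_add, Prod.mk_add_mk, add_zero, zero_add]

end NonUnitalAlgHom

/-- Lemma 6.3: if `f : A₁ × A₂ → B` is an algebra homomorphism with
`f(A₁ × A₂) + Z(B) = B`, then `f(A₁) + Z(B)` and `f(A₂) + Z(B)` are ideals of `B`
summing to `B`, and each is the two-sided annihilator of the other
(an almost direct decomposition of `B`). -/
theorem stmt7 {k A₁ A₂ B : Type*} [CommRing k]
    [NonUnitalNonAssocRing A₁] [NonUnitalNonAssocRing A₂] [NonUnitalNonAssocRing B]
    [Module k A₁] [Module k A₂] [Module k B]
    [SMulCommClass k B B] [IsScalarTower k B B]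
    (f : (A₁ × A₂) →ₙₐ[k] B)
    (hsur : ∀ b : B, ∃ p : A₁ × A₂, ∃ z : B,
      (∀ y : B, z * y = 0 ∧ y * z = 0) ∧ b = f p + z) :
    ∀ Z C₁ C₂ : Set B,
      Z = {x : B | ∀ y : B, x * y = 0 ∧ y * x = 0} →
      C₁ = {b : B | ∃ a : A₁, ∃ z ∈ Z, b = f (a, 0) + z} →
      C₂ = {b : B | ∃ a : A₂, ∃ z ∈ Z, b = f (0, a) + z} →
      ((∀ x ∈ C₁, ∀ y : B, x * y ∈ C₁ ∧ y * x ∈ C₁) ∧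
       (∀ x ∈ C₁, ∀ y ∈ C₁, x + y ∈ C₁) ∧
       (∀ (c : k), ∀ x ∈ C₁, c • x ∈ C₁) ∧
       (∀ x ∈ C₂, ∀ y : B, x * y ∈ C₂ ∧ y * x ∈ C₂) ∧
       (∀ x ∈ C₂, ∀ y ∈ C₂, x + y ∈ C₂) ∧
       (∀ (c : k), ∀ x ∈ C₂, c • x ∈ C₂) ∧
       (∀ b : B, ∃ x ∈ C₁, ∃ y ∈ C₂, b = x + y) ∧
       (∀ b : B, b ∈ C₁ ↔ ∀ y ∈ C₂, b * y = 0 ∧ y * b = 0) ∧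
       (∀ b : B, b ∈ C₂ ↔ ∀ y ∈ C₁, b * y = 0 ∧ y * b = 0)) := by
  intro Z C₁ C₂ hZ hC₁ hC₂
  replace hZ : Z = totalAnnihilator B := hZ
  subst hZ
  set S₁ := NonUnitalAlgHom.range (f.comp (NonUnitalAlgHom.inl k A₁ A₂))
  set S₂ := NonUnitalAlgHom.range (f.comp (NonUnitalAlgHom.inr k A₁ A₂))
  replace hC₁ : C₁ = (S₁ : Set B) + totalAnnihilator B := by
    ext; simp [hC₁, Set.mem_add, S₁, eq_comm]
  replace hC₂ : C₂ = (S₂ : Set B) + totalAnnihilator B := by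
    ext; simp [hC₂, Set.mem_add, S₂, eq_comm]
  subst hC₁ hC₂
  have horth := f.range_comp_inl_subset_twoSidedAnnihilator
  have hspan := f.range_comp_inl_add_range_comp_inr_add_totalAnnihilator hsur
  have horth' := subset_twoSidedAnnihilator_comm.1 horth
  have hspan' : (S₂ : Set B) + (S₁ : Set B) + totalAnnihilator B = Set.univ := by
    rwa [add_comm (S₂ : Set B)]
  exact ⟨fun x hx => mul_mem_add_totalAnnihilator horth hspan hx,
    fun x hx y hy => add_mem_add_totalAnnihilator hx hy,
    fun c x hx => smul_mem_add_totalAnnihilator c hx,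
    fun x hx => mul_mem_add_totalAnnihilator horth' hspan' hx,
    fun x hx y hy => add_mem_add_totalAnnihilator hx hy,
    fun c x hx => smul_mem_add_totalAnnihilator c hx,
    exists_add_eq_of_add_add_eq_univ hspan,
    Set.ext_iff.1 (add_totalAnnihilator_eq_twoSidedAnnihilator horth hspan),
    Set.ext_iff.1 (add_totalAnnihilator_eq_twoSidedAnnihilator horth' hspan')⟩
end

section
/- For any algebra $A$ over a commutative ring, if $A=B_1+B_2$ is an almost direct decomposition, then $Z(B_1)=Z(B_2)=Z(A)$. -/
section

variable {R A : Type*} [Semiring R] [NonUnitalNonAssocSemiring A] [Module R A]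

lemma mul_eq_zero_and_mul_eq_zero_of_sup_eq_top {B C : Submodule R A} (hsum : B ⊔ C = ⊤)
    {x : A} (hB : ∀ y ∈ B, x * y = 0 ∧ y * x = 0) (hC : ∀ y ∈ C, x * y = 0 ∧ y * x = 0)
    (y : A) : x * y = 0 ∧ y * x = 0 := by
  obtain ⟨b, hb, c, hc, rfl⟩ := Submodule.mem_sup.mp (hsum ▸ Submodule.mem_top : y ∈ B ⊔ C)
  exact ⟨by rw [mul_add, (hB b hb).1, (hC c hc).1, add_zero],
    by rw [add_mul, (hB b hb).2, (hC c hc).2, add_zero]⟩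

lemma setOf_annihilates_eq_of_sup_eq_top (B C : Submodule R A)
    (hB : ∀ x : A, x ∈ B ↔ ∀ y ∈ C, x * y = 0 ∧ y * x = 0) (hsum : B ⊔ C = ⊤) :
    {x : A | x ∈ B ∧ ∀ y ∈ B, x * y = 0 ∧ y * x = 0} =
      {x : A | ∀ y : A, x * y = 0 ∧ y * x = 0} := by
  ext x
  constructor
  · rintro ⟨hx, hxB⟩
    exact mul_eq_zero_and_mul_eq_zero_of_sup_eq_top hsum hxB ((hB x).mp hx)
  · intro hx
    exact ⟨(hB x).mpr fun y _ => hx y, fun y _ => hx y⟩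

end

theorem stmt8_general {k A : Type*} [CommRing k]
    [NonUnitalNonAssocRing A] [Module k A]
    (B₁ B₂ : Submodule k A)
    (hann₁ : ∀ x : A, x ∈ B₁ ↔ ∀ y ∈ B₂, x * y = 0 ∧ y * x = 0)
    (hann₂ : ∀ x : A, x ∈ B₂ ↔ ∀ y ∈ B₁, x * y = 0 ∧ y * x = 0)
    (hsum : B₁ ⊔ B₂ = ⊤) :
    {x : A | x ∈ B₁ ∧ ∀ y ∈ B₁, x * y = 0 ∧ y * x = 0} =
      {x : A | ∀ y : A, x * y = 0 ∧ y * x = 0} ∧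
    {x : A | x ∈ B₂ ∧ ∀ y ∈ B₂, x * y = 0 ∧ y * x = 0} =
      {x : A | ∀ y : A, x * y = 0 ∧ y * x = 0} :=
  ⟨setOf_annihilates_eq_of_sup_eq_top B₁ B₂ hann₁ hsum,
    setOf_annihilates_eq_of_sup_eq_top B₂ B₁ hann₂ (sup_comm B₁ B₂ ▸ hsum)⟩

/-- If `A = B₁ + B₂` is an almost direct decomposition (ideals, each the two-sided
annihilator of the other), then `Z(B₁) = Z(B₂) = Z(A)`. -/
theorem stmt8 {k A : Type*} [CommRing k]
    [NonUnitalNonAssocRing A] [Module k A]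
    [SMulCommClass k A A] [IsScalarTower k A A]
    (B₁ B₂ : Submodule k A)
    (hI₁ : ∀ x ∈ B₁, ∀ y : A, x * y ∈ B₁ ∧ y * x ∈ B₁)
    (hI₂ : ∀ x ∈ B₂, ∀ y : A, x * y ∈ B₂ ∧ y * x ∈ B₂)
    (hann₁ : ∀ x : A, x ∈ B₁ ↔ ∀ y ∈ B₂, x * y = 0 ∧ y * x = 0)
    (hann₂ : ∀ x : A, x ∈ B₂ ↔ ∀ y ∈ B₁, x * y = 0 ∧ y * x = 0)
    (hsum : B₁ ⊔ B₂ = ⊤) :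
    {x : A | x ∈ B₁ ∧ ∀ y ∈ B₁, x * y = 0 ∧ y * x = 0} =
      {x : A | ∀ y : A, x * y = 0 ∧ y * x = 0} ∧
    {x : A | x ∈ B₂ ∧ ∀ y ∈ B₂, x * y = 0 ∧ y * x = 0} =
      {x : A | ∀ y : A, x * y = 0 ∧ y * x = 0} :=
  stmt8_general B₁ B₂ hann₁ hann₂ hsum
end

section
/- Let $k$ be a field, $f:A\to B$ a homomorphism of $k$-algebras, and $C$ an ideal of $A$. Then there exists a $k$-algebra homomorphism $f_1:A\to B$ with $C\subseteq\ker f_1$ and $(f-f_1)(A)\subseteq Z(B)$ if and only if $f(C)\subseteq Z(B)$ and $f(AA\cap C)=\{0\}$. Moreover, if $B=f(A)+Z(B)$, then the condition $f(C)\subseteq Z(B)$ is implied by $f(AA\cap C)=\{0\}$. -/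
/-!
If `f - f₁` takes values in `Z(B)`, then `f` and `f₁` agree on products, hence on `AA`;
this gives necessity. Conversely, since `f` vanishes on `AA ∩ C`, the maps `f|_C` and
`0|_AA` glue to a linear map on `C + AA`, which extends over a field to `g : A → Z(B)`.
Then `f₁ = f - g` is multiplicative: `g` kills products and its values annihilate `B`.
Finally, if `B = f(A) + Z(B)` and `c ∈ C`, then `f(c) (f(a) + z) = f(c a)` with
`c a ∈ AA ∩ C`.
-/

open Submodule

section Annihilator

variable (R B : Type*) [CommSemiring R] [NonUnitalNonAssocSemiring B] [Module R B]
  [SMulCommClass R B B] [IsScalarTower R B B]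

/-- The paper's `Z(B)`. -/
def mulAnnihilator : Submodule R B where
  carrier := {x | ∀ y : B, x * y = 0 ∧ y * x = 0}
  add_mem' ha hb y := by simp [add_mul, mul_add, ha y, hb y]
  zero_mem' := by simp
  smul_mem' c x hx y := by simp [smul_mul_assoc, mul_smul_comm, hx y]

end Annihilator

theorem mul_eq_mul_of_sub_mem_mulAnnihilator {R B : Type*} [CommSemiring R]
    [NonUnitalNonAssocRing B] [Module R B] [SMulCommClass R B B] [IsScalarTower R B B]
    {a a' b b' : B} (ha : a - a' ∈ mulAnnihilator R B) (hb : b - b' ∈ mulAnnihilator R B) :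
    a * b = a' * b' := by
  have h₁ : a * (b - b') = 0 := (hb a).2
  have h₂ : (a - a') * b' = 0 := (ha b').1
  rw [mul_sub, sub_eq_zero] at h₁
  rw [sub_mul, sub_eq_zero] at h₂
  rw [h₁, h₂]

theorem LinearMap.exists_extend_of_eq_zero_on_inf {K V W : Type*} [DivisionRing K]
    [AddCommGroup V] [Module K V] [AddCommGroup W] [Module K W] {p q : Submodule K V}
    (φ : p →ₗ[K] W) (hφ : ∀ x : p, (x : V) ∈ q → φ x = 0) :
    ∃ ψ : V →ₗ[K] W, (∀ x : p, ψ x = φ x) ∧ ∀ x ∈ q, ψ x = 0 := by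
  set F : V →ₗ.[K] W := LinearPMap.sup ⟨p, φ⟩ ⟨q, 0⟩ fun x y hxy ↦ hφ x (hxy ▸ y.2)
  obtain ⟨ψ, hψ⟩ := F.toFun.exists_extend
  have hψF (x : V) (hx : x ∈ F.domain) : ψ x = F ⟨x, hx⟩ := congr($hψ ⟨x, hx⟩)
  refine ⟨ψ, fun x ↦ ?_, fun x hx ↦ ?_⟩
  · rw [hψF x (mem_sup_left x.2)]
    exact ((LinearPMap.left_le_sup _ _ _).2 rfl).symm
  · rw [hψF x (mem_sup_right hx)]
    exact ((LinearPMap.right_le_sup _ _ _).2 (x := ⟨x, hx⟩) rfl).symm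

namespace NonUnitalAlgHom

section CommSemiring

variable {R A B : Type*} [CommSemiring R] [NonUnitalNonAssocSemiring A] [Module R A]
  [NonUnitalNonAssocRing B] [Module R B] [SMulCommClass R B B] [IsScalarTower R B B]

theorem eqOn_span_mul_of_sub_mem_mulAnnihilator {f f₁ : A →ₙₐ[R] B}
    (h : ∀ a, f a - f₁ a ∈ mulAnnihilator R B) :
    Set.EqOn f f₁ (span R {z : A | ∃ x y : A, z = x * y}) :=
  LinearMap.eqOn_span' (f := (f : A →ₗ[R] B)) (g := f₁) <| by
    rintro _ ⟨x, y, rfl⟩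
    simpa using mul_eq_mul_of_sub_mem_mulAnnihilator (h x) (h y)

theorem eq_zero_on_inf_span_mul_of_sub_mem_mulAnnihilator {f f₁ : A →ₙₐ[R] B}
    {C : Submodule R A} (hf₁C : ∀ c ∈ C, f₁ c = 0) (h : ∀ a, f a - f₁ a ∈ mulAnnihilator R B) :
    (∀ c ∈ C, f c ∈ mulAnnihilator R B) ∧
      ∀ a ∈ span R {z : A | ∃ x y : A, z = x * y}, a ∈ C → f a = 0 := by
  refine ⟨fun c hc ↦ ?_, fun a ha hc ↦ ?_⟩
  · simpa [hf₁C c hc] using h c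
  · rw [eqOn_span_mul_of_sub_mem_mulAnnihilator h ha, hf₁C a hc]

theorem exists_apply_eq_sub (f : A →ₙₐ[R] B) (g : A →ₗ[R] B)
    (hg : ∀ a, g a ∈ mulAnnihilator R B) (hg_mul : ∀ x y, g (x * y) = 0) :
    ∃ f₁ : A →ₙₐ[R] B, ∀ a, f₁ a = f a - g a := by
  have hsub (a : A) : f a - (f a - g a) ∈ mulAnnihilator R B := by simpa using hg a
  refine ⟨{ toFun := fun a ↦ f a - g a
            map_smul' := by simp [smul_sub]
            map_zero' := by simp
            map_add' := fun a b ↦ by simp only [map_add]; abel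
            map_mul' := fun x y ↦ ?_ }, fun _ ↦ rfl⟩
  simp only [hg_mul, sub_zero, map_mul]
  exact mul_eq_mul_of_sub_mem_mulAnnihilator (hsub x) (hsub y)

theorem apply_mem_mulAnnihilator_of_eq_zero_on_inf_span_mul (f : A →ₙₐ[R] B)
    (hB : ∀ b : B, ∃ a : A, ∃ z ∈ mulAnnihilator R B, b = f a + z) {C : Submodule R A}
    (hC : ∀ x ∈ C, ∀ y : A, x * y ∈ C ∧ y * x ∈ C)
    (hCAA : ∀ a ∈ span R {z : A | ∃ x y : A, z = x * y}, a ∈ C → f a = 0) {c : A}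
    (hc : c ∈ C) : f c ∈ mulAnnihilator R B := by
  intro b
  obtain ⟨a, z, hz, rfl⟩ := hB b
  have hca : f c * f a = 0 := by
    rw [← map_mul]
    exact hCAA _ (subset_span ⟨c, a, rfl⟩) (hC c hc a).1
  have hac : f a * f c = 0 := by
    rw [← map_mul]
    exact hCAA _ (subset_span ⟨a, c, rfl⟩) (hC c hc a).2
  simp [mul_add, add_mul, hca, hac, (hz (f c)).1, (hz (f c)).2]

end CommSemiring

theorem exists_eq_zero_on_of_eq_zero_on_inf_span_mul {k A B : Type*} [Field k]
    [NonUnitalNonAssocRing A] [NonUnitalNonAssocRing B] [Module k A] [Module k B]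
    [SMulCommClass k B B] [IsScalarTower k B B] (f : A →ₙₐ[k] B) {C : Submodule k A}
    (hCZ : ∀ c ∈ C, f c ∈ mulAnnihilator k B)
    (hCAA : ∀ a ∈ span k {z : A | ∃ x y : A, z = x * y}, a ∈ C → f a = 0) :
    ∃ f₁ : A →ₙₐ[k] B, (∀ c ∈ C, f₁ c = 0) ∧ ∀ a, f a - f₁ a ∈ mulAnnihilator k B := by
  let φ : C →ₗ[k] mulAnnihilator k B :=
    ((f : A →ₗ[k] B) ∘ₗ C.subtype).codRestrict _ fun c ↦ hCZ c c.2
  obtain ⟨ψ, hψC, hψAA⟩ := φ.exists_extend_of_eq_zero_on_inf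
    (q := span k {z : A | ∃ x y : A, z = x * y}) fun c hc ↦ Subtype.ext (hCAA c hc c.2)
  obtain ⟨f₁, hf₁⟩ := f.exists_apply_eq_sub ((mulAnnihilator k B).subtype ∘ₗ ψ)
    (fun a ↦ (ψ a).2) fun x y ↦ by simp [hψAA _ (subset_span ⟨x, y, rfl⟩)]
  refine ⟨f₁, fun c hc ↦ ?_, fun a ↦ ?_⟩
  · rw [hf₁, LinearMap.comp_apply, hψC ⟨c, hc⟩, sub_eq_zero]
    rfl
  · rw [hf₁, sub_sub_cancel]
    exact (ψ a).2

end NonUnitalAlgHom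

theorem stmt9_general {k A B : Type*} [Field k]
    [NonUnitalNonAssocRing A] [NonUnitalNonAssocRing B]
    [Module k A] [Module k B]
    [SMulCommClass k B B] [IsScalarTower k B B]
    (f : A →ₙₐ[k] B) (C : Submodule k A)
    (hC : ∀ x ∈ C, ∀ y : A, x * y ∈ C ∧ y * x ∈ C) :
    ∀ Z : Set B, Z = {x : B | ∀ y : B, x * y = 0 ∧ y * x = 0} →
    ∀ AA : Submodule k A, AA = Submodule.span k {z : A | ∃ x y : A, z = x * y} →
      (((∃ f₁ : A →ₙₐ[k] B, (∀ c ∈ C, f₁ c = 0) ∧ ∀ a : A, f a - f₁ a ∈ Z) ↔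
          ((∀ c ∈ C, f c ∈ Z) ∧ (∀ a, a ∈ AA → a ∈ C → f a = 0))) ∧
       ((∀ b : B, ∃ a : A, ∃ z ∈ Z, b = f a + z) →
          (∀ a, a ∈ AA → a ∈ C → f a = 0) → (∀ c ∈ C, f c ∈ Z))) := by
  rintro Z rfl AA rfl
  exact ⟨⟨fun ⟨_, hf₁C, hf₁⟩ ↦ f.eq_zero_on_inf_span_mul_of_sub_mem_mulAnnihilator hf₁C hf₁,
      fun ⟨hCZ, hCAA⟩ ↦ f.exists_eq_zero_on_of_eq_zero_on_inf_span_mul hCZ hCAA⟩,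
    fun hB hCAA _ hc ↦ f.apply_mem_mulAnnihilator_of_eq_zero_on_inf_span_mul hB hC hCAA hc⟩

/-- Lemma 6.7: let `k` be a field, `f : A → B` a homomorphism of `k`-algebras, and
`C` an ideal of `A`. Then there is a homomorphism `f₁ : A → B` annihilating `C` with
`f - f₁` valued in `Z(B)` if and only if `f(C) ⊆ Z(B)` and `f(AA ∩ C) = {0}`.
Moreover, if `B = f(A) + Z(B)`, the first condition is implied by the second. -/
theorem stmt9 {k A B : Type*} [Field k]
    [NonUnitalNonAssocRing A] [NonUnitalNonAssocRing B]
    [Module k A] [Module k B]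
    [SMulCommClass k A A] [IsScalarTower k A A]
    [SMulCommClass k B B] [IsScalarTower k B B]
    (f : A →ₙₐ[k] B) (C : Submodule k A)
    (hC : ∀ x ∈ C, ∀ y : A, x * y ∈ C ∧ y * x ∈ C) :
    ∀ Z : Set B, Z = {x : B | ∀ y : B, x * y = 0 ∧ y * x = 0} →
    ∀ AA : Submodule k A, AA = Submodule.span k {z : A | ∃ x y : A, z = x * y} →
      (((∃ f₁ : A →ₙₐ[k] B, (∀ c ∈ C, f₁ c = 0) ∧ ∀ a : A, f a - f₁ a ∈ Z) ↔
          ((∀ c ∈ C, f c ∈ Z) ∧ (∀ a, a ∈ AA → a ∈ C → f a = 0))) ∧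
       ((∀ b : B, ∃ a : A, ∃ z ∈ Z, b = f a + z) →
          (∀ a, a ∈ AA → a ∈ C → f a = 0) → (∀ c ∈ C, f c ∈ Z))) :=
  stmt9_general f C hC
end

section
/- Let $(A_i)_{i\in I}$ be a family of algebras over a field. Then $\prod_I A_i$ is idempotent (equal to the span of products of its elements) if and only if every $A_i$ is idempotent and there is a natural number $n$ such that all but finitely many $A_i$ have idempotence rank at most $n$. -/
/-!
Projections and the coordinate inclusions `Pi.single` are multiplicative, so idempotence passes
from the product to the factors and from the factors to finitely supported elements. An element
`z` of the product whose coordinates outside a finite set are sums of `n` products is a single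
sum of `n` products plus a finitely supported correction. Conversely, if for every `n` infinitely
many factors contain an element that is not a sum of `n` products, pick distinct indices `iₙ`
with such witnesses `aₙ`; the element with coordinates `aₙ` at `iₙ` is no finite sum of
products.
-/

open Function

theorem Set.exists_injective_forall_mem_of_forall_infinite {α : Type*} {s : ℕ → Set α}
    (hs : ∀ n, (s n).Infinite) : ∃ f : ℕ → α, Injective f ∧ ∀ n, f n ∈ s n := by
  choose pick hpick_mem hpick_notMem using fun n (t : Finset α) => (hs n).exists_notMem_finset t
  classical
  -- `chosen n` collects the first `n` picks; the next pick avoids all of them.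
  let chosen : ℕ → Finset α := fun n => Nat.rec ∅ (fun n t => insert (pick n t) t) n
  have chosen_mono : Monotone chosen := monotone_nat_of_le_succ fun n => Finset.subset_insert _ _
  refine ⟨fun n => pick n (chosen n), Injective.of_lt_imp_ne fun m n hmn heq => ?_,
    fun n => hpick_mem n _⟩
  refine hpick_notMem n (chosen n) (chosen_mono hmn ?_)
  exact heq ▸ Finset.mem_insert_self _ _

def productSpan (k M : Type*) [Semiring k] [Mul M] [AddCommMonoid M] [Module k M] :
    Submodule k M :=
  Submodule.span k {z : M | ∃ x y : M, z = x * y}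

def IsSumOfProducts {M : Type*} [Mul M] [AddCommMonoid M] (n : ℕ) (a : M) : Prop :=
  ∃ b c : Fin n → M, a = ∑ h, b h * c h

theorem IsSumOfProducts.apply {I : Type*} {A : I → Type*} [∀ i, Mul (A i)]
    [∀ i, AddCommMonoid (A i)] {n : ℕ} {z : ∀ i, A i} (hz : IsSumOfProducts n z) (i : I) :
    IsSumOfProducts n (z i) := by
  obtain ⟨b, c, rfl⟩ := hz
  exact ⟨fun h => b h i, fun h => c h i, by simp only [Finset.sum_apply, Pi.mul_apply]⟩

section ProductSpan

variable {k : Type*} [Semiring k]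

theorem IsSumOfProducts.mem_productSpan {M : Type*} [Mul M] [AddCommMonoid M] [Module k M]
    {n : ℕ} {a : M} (ha : IsSumOfProducts n a) : a ∈ productSpan k M := by
  obtain ⟨b, c, rfl⟩ := ha
  exact Submodule.sum_mem _ fun h _ => Submodule.subset_span ⟨b h, c h, rfl⟩

theorem mem_productSpan_iff {M : Type*} [NonUnitalNonAssocSemiring M] [Module k M]
    [IsScalarTower k M M] {a : M} : a ∈ productSpan k M ↔ ∃ n, IsSumOfProducts n a := by
  refine ⟨fun ha => ?_, fun ⟨_, ha⟩ => ha.mem_productSpan⟩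
  induction ha using Submodule.span_induction with
  | mem z hz =>
    obtain ⟨x, y, rfl⟩ := hz
    exact ⟨1, fun _ => x, fun _ => y, by simp⟩
  | zero => exact ⟨0, 0, 0, by simp⟩
  | add x y _ _ hx hy =>
    obtain ⟨m, b, c, rfl⟩ := hx
    obtain ⟨m', b', c', rfl⟩ := hy
    exact ⟨m + m', Fin.append b b', Fin.append c c', by simp [Fin.sum_univ_add]⟩
  | smul r x _ hx =>
    obtain ⟨m, b, c, rfl⟩ := hx
    exact ⟨m, fun h => r • b h, c, by simp [Finset.smul_sum, smul_mul_assoc]⟩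

theorem map_productSpan_le {M N : Type*} [Mul M] [AddCommMonoid M] [Module k M] [Mul N]
    [AddCommMonoid N] [Module k N] (f : M →ₗ[k] N) (hf : ∀ x y, f (x * y) = f x * f y) :
    (productSpan k M).map f ≤ productSpan k N := by
  rw [productSpan, Submodule.map_span]
  apply Submodule.span_mono
  rintro _ ⟨_, ⟨x, y, rfl⟩, rfl⟩
  exact ⟨f x, f y, hf x y⟩

section Pi

variable {I : Type*} {A : I → Type*}

theorem productSpan_eq_top_of_pi [∀ i, Mul (A i)] [∀ i, AddCommMonoid (A i)]
    [∀ i, Module k (A i)] (h : productSpan k (∀ i, A i) = ⊤) (i : I) :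
    productSpan k (A i) = ⊤ := by
  refine top_unique ?_
  calc ⊤ = (⊤ : Submodule k (∀ i, A i)).map (LinearMap.proj i) := by
        rw [Submodule.map_top, LinearMap.range_eq_top.2 (surjective_eval i)]
    _ ≤ productSpan k (A i) := h ▸ map_productSpan_le _ fun _ _ => rfl

theorem Pi.single_mem_productSpan [DecidableEq I] [∀ i, NonUnitalNonAssocSemiring (A i)]
    [∀ i, Module k (A i)] {i : I} {a : A i} (ha : a ∈ productSpan k (A i)) :
    Pi.single i a ∈ productSpan k (∀ i, A i) :=
  map_productSpan_le (LinearMap.single k A i) (Pi.single_mul i)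
    (Submodule.mem_map_of_mem (f := LinearMap.single k A i) ha)

theorem Submodule.pi_mem_of_forall_single_mem [DecidableEq I] [∀ i, AddCommMonoid (A i)]
    [∀ i, Module k (A i)] {S : Submodule k (∀ i, A i)} (hS : ∀ i a, Pi.single i a ∈ S)
    {f : ∀ i, A i} (s : Finset I) (hf : ∀ i ∉ s, f i = 0) : f ∈ S := by
  have hsum : ∑ i ∈ s, Pi.single i (f i) = f := by
    funext j
    rw [Finset.sum_apply, Finset.sum_pi_single]
    split_ifs with hj
    · rfl
    · exact (hf j hj).symm
  exact hsum ▸ Submodule.sum_mem _ fun i _ => hS i _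

variable [∀ i, NonUnitalNonAssocRing (A i)] [∀ i, Module k (A i)]

theorem finite_not_forall_isSumOfProducts_of_productSpan_pi_eq_top
    [∀ i, IsScalarTower k (A i) (A i)] (h : productSpan k (∀ i, A i) = ⊤) :
    ∃ n, {i | ¬ ∀ a : A i, IsSumOfProducts n a}.Finite := by
  by_contra! hinf
  obtain ⟨f, hf_inj, hf_bad⟩ := Set.exists_injective_forall_mem_of_forall_infinite hinf
  have hdiag : ∀ i, ∃ x : A i, ∀ n, f n = i → ¬ IsSumOfProducts n x := by
    intro i
    by_cases hi : ∃ n, f n = i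
    · obtain ⟨n, rfl⟩ := hi
      obtain ⟨x, hx⟩ := hf_bad n
      exact ⟨x, fun m hm => by rwa [hf_inj hm]⟩
    · exact ⟨0, fun n hn => (hi ⟨n, hn⟩).elim⟩
  choose z hz using hdiag
  obtain ⟨m, hm⟩ := mem_productSpan_iff.1 (h ▸ Submodule.mem_top : z ∈ productSpan k _)
  exact hz (f m) m rfl (hm.apply (f m))

theorem productSpan_pi_eq_top (hA : ∀ i, productSpan k (A i) = ⊤) {n : ℕ}
    (hn : {i | ¬ ∀ a : A i, IsSumOfProducts n a}.Finite) :
    productSpan k (∀ i, A i) = ⊤ := by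
  classical
  refine eq_top_iff.2 fun z _ => ?_
  have hsplit : ∀ i, ∃ b c : Fin n → A i,
      i ∉ {i | ¬ ∀ a : A i, IsSumOfProducts n a} → z i = ∑ h, b h * c h := by
    intro i
    by_cases hi : ∀ a : A i, IsSumOfProducts n a
    · obtain ⟨b, c, hbc⟩ := hi (z i)
      exact ⟨b, c, fun _ => hbc⟩
    · exact ⟨0, 0, fun h => (h hi).elim⟩
  choose b c hbc using hsplit
  set w : ∀ i, A i := ∑ h, (fun i => b i h) * fun i => c i h
  have hw : w ∈ productSpan k (∀ i, A i) := IsSumOfProducts.mem_productSpan ⟨_, _, rfl⟩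
  have hrest : z - w ∈ productSpan k (∀ i, A i) := by
    refine Submodule.pi_mem_of_forall_single_mem
      (fun i a => Pi.single_mem_productSpan (hA i ▸ Submodule.mem_top)) hn.toFinset fun i hi => ?_
    rw [Set.Finite.mem_toFinset] at hi
    simp only [w, Pi.sub_apply, Finset.sum_apply, Pi.mul_apply, ← hbc i hi, sub_self]
  simpa using add_mem hrest hw

end Pi

end ProductSpan

theorem stmt10_general {k I : Type*} [Field k] (A : I → Type*)
    [∀ i, NonUnitalNonAssocRing (A i)] [∀ i, Module k (A i)]
    [∀ i, IsScalarTower k (A i) (A i)] :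
    Submodule.span k {z : ∀ i, A i | ∃ x y : ∀ i, A i, z = x * y} = ⊤ ↔
      ((∀ i, Submodule.span k {z : A i | ∃ x y : A i, z = x * y} = ⊤) ∧
        ∃ n : ℕ,
          {i : I | ¬ ∀ a : A i, ∃ b c : Fin n → A i, a = ∑ h, b h * c h}.Finite) :=
  ⟨fun h => ⟨productSpan_eq_top_of_pi h,
      finite_not_forall_isSumOfProducts_of_productSpan_pi_eq_top h⟩,
    fun ⟨hA, _, hn⟩ => productSpan_pi_eq_top hA hn⟩

/-- Lemma 8.1: a direct product `∏ᵢ Aᵢ` of algebras over a field is idempotent iff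
every `Aᵢ` is idempotent and there is `n : ℕ` bounding the idempotence rank of all
but finitely many `Aᵢ` (idempotence rank ≤ n meaning every element is a sum of `n`
products). -/
theorem stmt10 {k I : Type*} [Field k] (A : I → Type*)
    [∀ i, NonUnitalNonAssocRing (A i)] [∀ i, Module k (A i)]
    [∀ i, SMulCommClass k (A i) (A i)] [∀ i, IsScalarTower k (A i) (A i)] :
    Submodule.span k {z : ∀ i, A i | ∃ x y : ∀ i, A i, z = x * y} = ⊤ ↔
      ((∀ i, Submodule.span k {z : A i | ∃ x y : A i, z = x * y} = ⊤) ∧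
        ∃ n : ℕ,
          {i : I | ¬ ∀ a : A i, ∃ b c : Fin n → A i, a = ∑ h, b h * c h}.Finite) :=
  stmt10_general A
end

section
/- Let $L$ be a Lie algebra over a commutative ring $k$ with $[L,L]=L$, generated as a Lie algebra by a set $X$. Then $L=\sum_{x\in X}[x,L]$, the sum of the $k$-submodules $[x,L]=\{[x,y]\mid y\in L\}$ over $x\in X$ (where each $[x,L]$ is taken as the submodule it spans). -/
/-! The elements `a` with `⁅a, L⁆ ⊆ M` form a Lie subalgebra for any submodule `M` (Jacobi
identity). For `M = ∑_{x ∈ X} [x, L]` this subalgebra contains `X`, hence is all of `L`, so `M`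
contains every bracket, that is, `M ⊇ [L, L] = L`. -/

namespace Submodule

variable {k L : Type*} [CommRing k] [LieRing L] [LieAlgebra k L]

def adMapsInto (M : Submodule k L) : LieSubalgebra k L where
  carrier := {a | ∀ b, ⁅a, b⁆ ∈ M}
  add_mem' h₁ h₂ b := by simpa only [add_lie] using M.add_mem (h₁ b) (h₂ b)
  zero_mem' b := by simpa only [zero_lie] using M.zero_mem
  smul_mem' c _ h b := by simpa only [smul_lie] using M.smul_mem c (h b)
  lie_mem' {a₁ a₂} h₁ h₂ b := by
    rw [lie_lie]
    exact M.sub_mem (h₁ _) (h₂ _)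

theorem mem_adMapsInto {M : Submodule k L} {a : L} : a ∈ M.adMapsInto ↔ ∀ b, ⁅a, b⁆ ∈ M :=
  Iff.rfl

theorem eq_top_of_lie_mem {M : Submodule k L}
    (hLL : span k {z : L | ∃ x y : L, z = ⁅x, y⁆} = ⊤)
    {X : Set L} (hX : LieSubalgebra.lieSpan k L X = ⊤) (hXM : ∀ x ∈ X, ∀ y, ⁅x, y⁆ ∈ M) :
    M = ⊤ := by
  have hM : M.adMapsInto = ⊤ := eq_top_iff.2 (hX ▸ LieSubalgebra.lieSpan_le.2 hXM)
  rw [eq_top_iff, ← hLL, span_le]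
  rintro _ ⟨x, y, rfl⟩
  exact mem_adMapsInto.1 (hM ▸ LieSubalgebra.mem_top x) y

end Submodule

/-- Lemma 9.1(c): if `[L, L] = L` and `L` is generated as a Lie algebra by a set `X`,
then `L = ∑_{x ∈ X} [x, L]`. -/
theorem stmt13 {k L : Type*} [CommRing k] [LieRing L] [LieAlgebra k L]
    (hLL : Submodule.span k {z : L | ∃ x y : L, z = ⁅x, y⁆} = ⊤)
    (X : Set L) (hX : LieSubalgebra.lieSpan k L X = ⊤) :
    (⨆ x ∈ X, Submodule.span k {z : L | ∃ y : L, z = ⁅x, y⁆}) = ⊤ :=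
  Submodule.eq_top_of_lie_mem hLL hX fun x hx y =>
    Submodule.mem_iSup_of_mem x <| Submodule.mem_iSup_of_mem hx <| Submodule.subset_span ⟨y, rfl⟩
end

section
/- Let $k$ be an infinite field of cardinality $\kappa$, and let $\mathcal{U}$ be an ultrafilter on a set $I$ that is not $\kappa^+$-complete (i.e., not closed under intersections of families of at most $\kappa$ members). Then the ultrapower field $K=k^I/\mathcal{U}$ has uncountable dimension over $k$, and moreover $[K:k]\ge \mathrm{card}(k)$. -/
/-!
Failure of `κ⁺`-completeness gives `S ⊆ 𝒰` with `|S| ≤ |k|` and `⋂ S ∉ 𝒰`. Labelling the members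
of `S` by elements of `k` and sending `i` to the label of some member missing `i` yields
`g : I → k` none of whose fibres is `𝒰`-large, i.e. `g` tends to the cofinite filter along `𝒰`.
Its class `x ∈ K` is transcendental over `k`: a polynomial vanishing at `x` would trap `g` in the
polynomial's finite zero set on a `𝒰`-large set. Hence the `(x - c)⁻¹`, `c ∈ k`, are linearly
independent and `[K : k] ≥ |k|`, which is uncountable when `k` is. If `k` is countable, `g`
becomes `N : I → ℕ` tending to `∞` along `𝒰`, and sending a bit sequence `x` to the class of
`i ↦ (code of the first N i bits of x)` embeds `2^ℵ₀` into `K`; over a field smaller than itself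
a vector space has dimension equal to its cardinality.
-/

universe u

open Filter Cardinal Polynomial

namespace Filter.Germ

variable {I R A : Type*} [CommSemiring R] [Semiring A] [Algebra R A] (l : Filter I)

-- Built on top of the existing `Module R (Germ l A)`, so `Module.rank` is unaffected.
noncomputable instance instAlgebra : Algebra R (Germ l A) :=
  Algebra.ofModule
    (fun r x y => Germ.inductionOn₂ x y fun f g => congrArg ofFun (smul_mul_assoc r f g))
    (fun r x y => Germ.inductionOn₂ x y fun f g => congrArg ofFun (mul_smul_comm r f g))

def coeAlgHom : (I → A) →ₐ[R] Germ l A :=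
  { coeRingHom l with
    commutes' := fun r => by
      show ((algebraMap R (I → A) r : I → A) : Germ l A) = r • 1
      rw [Algebra.algebraMap_eq_smul_one]
      rfl }

theorem aeval_coe (g : I → A) (p : R[X]) :
    aeval (g : Germ l A) p = ((fun i => aeval (g i) p : I → A) : Germ l A) := by
  have := aeval_algHom_apply (coeAlgHom (R := R) l) g p
  rw [aeval_pi_apply] at this
  exact this

end Filter.Germ

theorem Filter.Tendsto.transcendental_coe {I R : Type*} [CommRing R] [IsDomain R]
    {l : Filter I} [l.NeBot] {g : I → R} (hg : Tendsto g l cofinite) :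
    Transcendental R (g : Germ l R) := by
  classical
  rintro ⟨p, hp, hpg⟩
  rw [Germ.aeval_coe, ← Germ.coe_zero, Germ.coe_eq] at hpg
  have hroots : ∀ᶠ i in l, g i ∉ p.roots.toFinset :=
    hg p.roots.toFinset.finite_toSet.compl_mem_cofinite
  obtain ⟨i, hi, hir⟩ := (hpg.and hroots).exists
  exact hir (Multiset.mem_toFinset.mpr ((mem_roots hp).mpr (by simpa using hi)))

theorem Ultrafilter.exists_tendsto_cofinite_of_sInter_notMem {I k : Type*} [Nonempty k]
    (U : Ultrafilter I) {S : Set (Set I)} (hSU : ∀ s ∈ S, s ∈ U) (hS : ⋂₀ S ∉ U) (e : S ↪ k) :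
    ∃ g : I → k, Tendsto g U cofinite := by
  classical
  have hcompl : ∀ᶠ i in U, ∃ s : S, i ∉ (s : Set I) := by
    filter_upwards [U.compl_mem_iff_notMem.mpr hS] with i hi
    simpa using hi
  refine ⟨fun i => if h : ∃ s : S, i ∉ (s : Set I) then e h.choose else Classical.arbitrary k,
    le_cofinite_iff_eventually_ne.mpr fun c => eventually_map.mpr ?_⟩
  by_cases hc : ∃ s, e s = c
  · obtain ⟨s, rfl⟩ := hc
    filter_upwards [hcompl, hSU s s.2] with i hi his
    rw [dif_pos hi]
    exact fun h => hi.choose_spec (e.injective h ▸ his)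
  · filter_upwards [hcompl] with i hi
    rw [dif_pos hi]
    exact fun h => hc ⟨_, h⟩

theorem Filter.Germ.injective_coe_comp {I γ α β : Type*} {l : Filter I} [l.NeBot]
    {f : Filter γ} {N : I → γ} (hN : Tendsto N l f) {F : α → γ → β}
    (hF : Pairwise fun x y => ∀ᶠ n in f, F x n ≠ F y n) :
    Function.Injective fun x => ((F x ∘ N : I → β) : Germ l β) := by
  intro x y hxy
  by_contra hxy'
  obtain ⟨i, heq, hne⟩ := ((Germ.coe_eq.mp hxy).and (hN.eventually (hF hxy'))).exists
  exact hne heq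

theorem eventually_ofFn_ne_ofFn {α : Type*} {x y : ℕ → α} (h : x ≠ y) :
    ∀ᶠ n in atTop, List.ofFn (fun m : Fin n => x m) ≠ List.ofFn (fun m : Fin n => y m) := by
  obtain ⟨m, hm⟩ := Function.ne_iff.mp h
  filter_upwards [eventually_gt_atTop m] with n hn heq
  exact hm (congrFun (List.ofFn_inj.mp heq) ⟨m, hn⟩)

theorem Filter.Germ.continuum_le_mk_of_tendsto_atTop {I β : Type*} [Infinite β]
    {l : Filter I} [l.NeBot] {N : I → ℕ} (hN : Tendsto N l atTop) : 𝔠 ≤ #(Germ l β) := by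
  let c : List Bool ↪ β :=
    (⟨Encodable.encode, Encodable.encode_injective⟩ : List Bool ↪ ℕ).trans (Infinite.natEmbedding β)
  have hinj := Germ.injective_coe_comp hN
    (F := fun (x : ℕ → Bool) n => c (List.ofFn fun m : Fin n => x m))
    fun x y h => (eventually_ofFn_ne_ofFn h).mono fun n hn => c.injective.ne hn
  simpa using lift_mk_le_lift_mk_of_injective hinj

/-- Theorem B.2 (bigger): if `k` is an infinite field of cardinality `κ` and `𝒰` is an
ultrafilter on `I` that is not `κ⁺`-complete (not closed under intersections of
families of at most `κ` of its members), then the ultrapower field `K = k^I/𝒰`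
has uncountable dimension over `k`, and `[K : k] ≥ card k`. -/
theorem stmt15 {k I : Type u} [Field k] [Infinite k] (U : Ultrafilter I)
    (hU : ¬ ∀ S : Set (Set I), (∀ s ∈ S, s ∈ U) → Cardinal.mk S ≤ Cardinal.mk k →
      ⋂₀ S ∈ U) :
    Cardinal.aleph0 < Module.rank k (Filter.Germ (U : Filter I) k) ∧
    Cardinal.mk k ≤ Module.rank k (Filter.Germ (U : Filter I) k) := by
  push Not at hU
  obtain ⟨S, hSU, ⟨e⟩, hS⟩ := hU
  obtain ⟨g, hg⟩ := U.exists_tendsto_cofinite_of_sInter_notMem hSU hS e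
  have hk : #k ≤ Module.rank k (Germ (U : Filter I) k) :=
    hg.transcendental_coe.linearIndependent_sub_inv.cardinal_le_rank
  refine ⟨?_, hk⟩
  rcases lt_or_ge ℵ₀ #k with hlt | hle
  · exact hlt.trans_le hk
  have : Countable k := mk_le_aleph0_iff.mp hle
  obtain ⟨n, hn⟩ := Countable.exists_injective_nat k
  have hN : Tendsto (n ∘ g) U atTop := Nat.cofinite_eq_atTop ▸ hn.tendsto_cofinite.comp hg
  have hK : ℵ₀ < #(Germ (U : Filter I) k) :=
    aleph0_lt_continuum.trans_le (Germ.continuum_le_mk_of_tendsto_atTop hN)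
  rwa [Module.Free.rank_eq_mk_of_infinite_lt k _ (by simpa using hle.trans_lt hK)]
end

section
/- For any field $k$ and positive integer $i$, let $A$ be the $k$-algebra with underlying vector space $M_i(k)$ and multiplication $a*b = a\,e_{11}\,b$ (ordinary matrix products, where $e_{11}$ is the matrix unit). Then $A$ is an associative idempotent algebra whose idempotence rank equals $i$: every matrix is a sum of $i$ products $a*b$, and the identity matrix is not a sum of fewer than $i$ such products. -/
/-!
Every matrix `c` is `∑ₕ (c eₕ₁) e₁₁ e₁ₕ = ∑ₕ c eₕₕ`, a sum of `i` products. Conversely each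
product `a e₁₁ b` has rank at most one, so by subadditivity of rank a sum of `m` products has
rank at most `m`, while the identity has rank `i`.
-/

open Matrix

namespace Matrix

variable {k l m n o : Type*} [Field k] [Fintype n]

theorem rank_add_le (A B : Matrix m n k) : (A + B).rank ≤ A.rank + B.rank := by
  have hrange : LinearMap.range (A + B).mulVecLin ≤
      LinearMap.range A.mulVecLin ⊔ LinearMap.range B.mulVecLin := by
    rw [mulVecLin_add]
    rintro _ ⟨v, rfl⟩
    exact Submodule.add_mem_sup ⟨v, rfl⟩ ⟨v, rfl⟩
  exact (Submodule.finrank_mono hrange).trans (Submodule.finrank_add_le_finrank_add_finrank _ _)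

theorem rank_sum_le {ι : Type*} (s : Finset ι) (A : ι → Matrix m n k) :
    (∑ h ∈ s, A h).rank ≤ ∑ h ∈ s, (A h).rank :=
  Finset.le_sum_of_subadditive rank (rank_zero (R := k)).le rank_add_le s A

theorem rank_mul_single_one_mul_le_one [Fintype m] [Fintype o] [DecidableEq m] [DecidableEq n]
    (a : Matrix l m k) (p : m) (q : n) (b : Matrix n o k) :
    (a * single p q (1 : k) * b).rank ≤ 1 := by
  calc (a * single p q (1 : k) * b).rank ≤ (single p q (1 : k)).rank :=
        (rank_mul_le_left _ _).trans (rank_mul_le_right _ _)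
    _ ≤ 1 := by
        rw [single_eq_single_vecMulVec_single]
        exact rank_vecMulVec_le _ _

theorem card_le_of_one_eq_sum_mul_single_one_mul [Fintype l] [Fintype o] [DecidableEq l]
    [DecidableEq n] [DecidableEq o] {r : ℕ} (p : l) (q : o)
    (a : Fin r → Matrix n l k) (b : Fin r → Matrix o n k)
    (hsum : (1 : Matrix n n k) = ∑ h, a h * single p q (1 : k) * b h) :
    Fintype.card n ≤ r := by
  calc Fintype.card n = (1 : Matrix n n k).rank := rank_one.symm
    _ ≤ ∑ h, (a h * single p q (1 : k) * b h).rank := hsum ▸ rank_sum_le _ _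
    _ ≤ ∑ _h : Fin r, 1 := Finset.sum_le_sum fun h _ => rank_mul_single_one_mul_le_one _ _ _ _
    _ = r := by simp

theorem eq_sum_mul_single_mul_single_mul_single [Fintype m] [DecidableEq m]
    (c : Matrix l m k) (p : m) :
    c = ∑ h : m, (c * single h p (1 : k)) * single p p (1 : k) * single p h (1 : k) := by
  simp only [Matrix.mul_assoc, single_mul_single_same, mul_one]
  rw [← Matrix.mul_sum, sum_single_one, Matrix.mul_one]

end Matrix

/-- Lemma 12.1: for a field `k` and `i > 0`, the algebra on `Mᵢ(k)` with
multiplication `a * b := a e₁₁ b` is associative and idempotent with idempotence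
rank exactly `i`: every matrix is a sum of `i` such products, but the identity
matrix is not a sum of fewer than `i` of them. -/
theorem stmt19 {k : Type*} [Field k] (i : ℕ) (hi : 0 < i) :
    ∀ E : Matrix (Fin i) (Fin i) k, E = Matrix.single ⟨0, hi⟩ ⟨0, hi⟩ 1 →
      ((∀ a b c : Matrix (Fin i) (Fin i) k,
          (a * E * b) * E * c = a * E * (b * E * c)) ∧
       (∀ c : Matrix (Fin i) (Fin i) k, ∃ a b : Fin i → Matrix (Fin i) (Fin i) k,
          c = ∑ h, a h * E * b h) ∧
       ¬ ∃ m : ℕ, m < i ∧ ∃ a b : Fin m → Matrix (Fin i) (Fin i) k,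
          (1 : Matrix (Fin i) (Fin i) k) = ∑ h, a h * E * b h) := by
  rintro E rfl
  refine ⟨fun a b c => by simp only [Matrix.mul_assoc], fun c => ?_, ?_⟩
  · exact ⟨_, _, eq_sum_mul_single_mul_single_mul_single c ⟨0, hi⟩⟩
  · rintro ⟨m, hm, a, b, hsum⟩
    simpa using (card_le_of_one_eq_sum_mul_single_one_mul _ _ a b hsum).trans_lt hm
end
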